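/- Assume C_HN < C_HA and set κ = (C_L − C_HN)/(C_HA − C_HN). For every p ∈ [0,1] with p ≤ κ, the HP-value at p is at most the LP-value at p; hence V(p) = HP-value(p) and offering the high-privacy coupon is optimal at belief p. -/

import Mathlib

/-- Two-state consumer model: transition probabilities `lNA ≤ lAA`, costs
`CHN ≤ CL ≤ CHA`, discount factor `β ∈ (0,1)`. -/
structure CouponModel where
  lNA : ℝ
  lAA : ℝ
  CHN : ℝ
  CL : ℝ
  CHA : ℝ
  β : ℝ
  lNA_nonneg : 0 ≤ lNA
  lNA_le_lAA : lNA ≤ lAA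
  lAA_le_one : lAA ≤ 1
  CHN_le_CL : CHN ≤ CL
  CL_le_CHA : CL ≤ CHA
  β_pos : 0 < β
  β_lt_one : β < 1

namespace CouponModel

/-- Belief-update map `T(p) = (1-p)·λNA + p·λAA`. -/
noncomputable def T (M : CouponModel) (p : ℝ) : ℝ := (1 - p) * M.lNA + p * M.lAA

/-- Bellman operator. -/
noncomputable def B (M : CouponModel) (f : ℝ → ℝ) (p : ℝ) : ℝ :=
  min (M.CL + M.β * f (M.T p))
    ((1 - p) * M.CHN + p * M.CHA + M.β * ((1 - p) * f M.lNA + p * f M.lAA))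

/-- A function `f : ℝ → ℝ` is bounded on the belief space `[0,1]`. -/
def IsBdd (f : ℝ → ℝ) : Prop := ∃ C : ℝ, ∀ p ∈ Set.Icc (0:ℝ) 1, |f p| ≤ C

/-- `V` is a bounded fixed point of the Bellman operator on `[0,1]`. -/
def IsValue (M : CouponModel) (V : ℝ → ℝ) : Prop :=
  IsBdd V ∧ ∀ p ∈ Set.Icc (0:ℝ) 1, V p = M.B V p

/-- Value of offering the low-privacy coupon at belief `p`. -/
noncomputable def LPval (M : CouponModel) (V : ℝ → ℝ) (p : ℝ) : ℝ :=
  M.CL + M.β * V (M.T p)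

/-- Value of offering the high-privacy coupon at belief `p`. -/
noncomputable def HPval (M : CouponModel) (V : ℝ → ℝ) (p : ℝ) : ℝ :=
  (1 - p) * M.CHN + p * M.CHA + M.β * ((1 - p) * V M.lNA + p * V M.lAA)

/-- `τ` is a threshold for `V`: HP is optimal below `τ`, LP is optimal above `τ`. -/
def IsThreshold (M : CouponModel) (V : ℝ → ℝ) (τ : ℝ) : Prop :=
  τ ∈ Set.Icc (0:ℝ) 1 ∧
    (∀ p ∈ Set.Icc (0:ℝ) τ, V p = M.HPval V p) ∧
    (∀ p ∈ Set.Icc τ (1:ℝ), V p = M.LPval V p)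

end CouponModel

/-!
The HP-value is affine in the belief, while the LP-value is the constant `C_L` plus `β` times
`V ∘ T`. Below `κ` the immediate cost of HP is at most `C_L`, so it suffices that the expected
continuation value under HP, `(1-p)·V(λNA) + p·V(λAA)`, is at most `V(T p)`: this is concavity
of `V` on `[0,1]`. Concavity follows from the fixed-point equation: if `V` is concave up to an
additive error `δ ≥ 0`, then `V = min (LP, HP)` is concave up to `β·δ`, since the HP branch is
affine and the LP branch composes `V` with the affine map `T`. Boundedness of `V` gives a
finite initial error, and `β^n → 0`.
-/

namespace CouponModel

open Set

lemma lNA_mem (M : CouponModel) : M.lNA ∈ Icc (0:ℝ) 1 :=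
  ⟨M.lNA_nonneg, M.lNA_le_lAA.trans M.lAA_le_one⟩

lemma lAA_mem (M : CouponModel) : M.lAA ∈ Icc (0:ℝ) 1 :=
  ⟨M.lNA_nonneg.trans M.lNA_le_lAA, M.lAA_le_one⟩

lemma convexCombo_mem {a b t : ℝ} (ha : a ∈ Icc (0:ℝ) 1) (hb : b ∈ Icc (0:ℝ) 1)
    (ht : t ∈ Icc (0:ℝ) 1) : (1 - t) * a + t * b ∈ Icc (0:ℝ) 1 := by
  simpa only [smul_eq_mul] using
    convex_Icc (0:ℝ) 1 ha hb (sub_nonneg.mpr ht.2) ht.1 (sub_add_cancel 1 t)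

lemma T_mem (M : CouponModel) {p : ℝ} (hp : p ∈ Icc (0:ℝ) 1) : M.T p ∈ Icc (0:ℝ) 1 :=
  convexCombo_mem M.lNA_mem M.lAA_mem hp

lemma T_convexCombo (M : CouponModel) (a b t : ℝ) :
    M.T ((1 - t) * a + t * b) = (1 - t) * M.T a + t * M.T b := by
  unfold T; ring

lemma HPval_convexCombo (M : CouponModel) (V : ℝ → ℝ) (a b t : ℝ) :
    M.HPval V ((1 - t) * a + t * b) = (1 - t) * M.HPval V a + t * M.HPval V b := by
  unfold HPval; ring

lemma LPval_convexCombo_le (M : CouponModel) (V : ℝ → ℝ) {δ a b t : ℝ}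
    (hV : (1 - t) * V (M.T a) + t * V (M.T b) ≤ V (M.T ((1 - t) * a + t * b)) + δ) :
    (1 - t) * M.LPval V a + t * M.LPval V b ≤ M.LPval V ((1 - t) * a + t * b) + M.β * δ := by
  unfold LPval
  nlinarith [M.β_pos]

lemma IsValue.eq_min {M : CouponModel} {V : ℝ → ℝ} (hV : M.IsValue V) {p : ℝ}
    (hp : p ∈ Icc (0:ℝ) 1) : V p = min (M.LPval V p) (M.HPval V p) :=
  hV.2 p hp

def ConcaveUpTo (δ : ℝ) (f : ℝ → ℝ) : Prop :=
  ∀ a ∈ Icc (0:ℝ) 1, ∀ b ∈ Icc (0:ℝ) 1, ∀ t ∈ Icc (0:ℝ) 1,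
    (1 - t) * f a + t * f b ≤ f ((1 - t) * a + t * b) + δ

lemma IsBdd.concaveUpTo {f : ℝ → ℝ} (hf : IsBdd f) : ∃ δ, 0 ≤ δ ∧ ConcaveUpTo δ f := by
  obtain ⟨C, hC⟩ := hf
  have hC₀ : 0 ≤ C := (abs_nonneg _).trans (hC 0 ⟨le_rfl, zero_le_one⟩)
  refine ⟨2 * C, by positivity, fun a ha b hb t ht => ?_⟩
  have ha' := (abs_le.mp (hC a ha)).2
  have hb' := (abs_le.mp (hC b hb)).2
  have hm := (abs_le.mp (hC _ (convexCombo_mem ha hb ht))).1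
  nlinarith [ht.1, ht.2]

lemma IsValue.concaveUpTo_mul {M : CouponModel} {V : ℝ → ℝ} (hV : M.IsValue V) {δ : ℝ}
    (hδ : 0 ≤ δ) (hVδ : ConcaveUpTo δ V) : ConcaveUpTo (M.β * δ) V := by
  intro a ha b hb t ht
  obtain ⟨ht₀, ht₁⟩ := ht
  have ht₁' : 0 ≤ 1 - t := sub_nonneg.mpr ht₁
  have hLP : (1 - t) * V a + t * V b ≤ M.LPval V ((1 - t) * a + t * b) + M.β * δ := by
    refine le_trans ?_ (M.LPval_convexCombo_le V ?_)
    · rw [hV.eq_min ha, hV.eq_min hb]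
      gcongr <;> exact min_le_left _ _
    · rw [M.T_convexCombo]
      exact hVδ _ (M.T_mem ha) _ (M.T_mem hb) t ⟨ht₀, ht₁⟩
  have hHP : (1 - t) * V a + t * V b ≤ M.HPval V ((1 - t) * a + t * b) + M.β * δ := by
    calc (1 - t) * V a + t * V b ≤ (1 - t) * M.HPval V a + t * M.HPval V b := by
          rw [hV.eq_min ha, hV.eq_min hb]
          gcongr <;> exact min_le_right _ _
      _ = M.HPval V ((1 - t) * a + t * b) := (M.HPval_convexCombo V a b t).symm
      _ ≤ _ := le_add_of_nonneg_right (mul_nonneg M.β_pos.le hδ)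
  rw [hV.eq_min (convexCombo_mem ha hb ⟨ht₀, ht₁⟩)]
  exact (le_min hLP hHP).trans_eq (min_add_add_right _ _ _)

lemma le_zero_of_forall_le_pow_mul {β c x : ℝ} (hβ₀ : 0 ≤ β) (hβ₁ : β < 1)
    (hx : ∀ n : ℕ, x ≤ β ^ n * c) : x ≤ 0 := by
  have hlim : Filter.Tendsto (fun n : ℕ => β ^ n * c) Filter.atTop (nhds 0) := by
    simpa using (tendsto_pow_atTop_nhds_zero_of_lt_one hβ₀ hβ₁).mul_const c
  exact ge_of_tendsto' hlim hx

lemma IsValue.concaveOn {M : CouponModel} {V : ℝ → ℝ} (hV : M.IsValue V) :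
    ConcaveOn ℝ (Icc 0 1) V := by
  obtain ⟨δ, hδ₀, hδ⟩ := hV.1.concaveUpTo
  have hpow : ∀ n : ℕ, ConcaveUpTo (M.β ^ n * δ) V := by
    intro n
    induction n with
    | zero => simpa using hδ
    | succ n ih =>
      rw [pow_succ', mul_assoc]
      exact hV.concaveUpTo_mul (mul_nonneg (pow_nonneg M.β_pos.le n) hδ₀) ih
  refine ⟨convex_Icc 0 1, fun a ha b hb s t hs ht hst => ?_⟩
  obtain rfl : s = 1 - t := by linarith
  simp only [smul_eq_mul]
  refine sub_nonpos.mp (le_zero_of_forall_le_pow_mul (c := δ) M.β_pos.le M.β_lt_one fun n => ?_)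
  linarith [hpow n a ha b hb t ⟨ht, by linarith⟩]

lemma IsValue.HPval_le_LPval {M : CouponModel} {V : ℝ → ℝ} (hV : M.IsValue V) {p : ℝ}
    (hp : p ∈ Icc (0:ℝ) 1) (hcost : (1 - p) * M.CHN + p * M.CHA ≤ M.CL) :
    M.HPval V p ≤ M.LPval V p := by
  have hcont : (1 - p) * V M.lNA + p * V M.lAA ≤ V (M.T p) := by
    simpa only [smul_eq_mul, T] using
      hV.concaveOn.2 M.lNA_mem M.lAA_mem (sub_nonneg.mpr hp.2) hp.1 (sub_add_cancel 1 p)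
  unfold HPval LPval
  nlinarith [M.β_pos]

end CouponModel

/-- If `p ≤ κ = (C_L - C_HN)/(C_HA - C_HN)`, then the HP-value at `p` is at most
the LP-value at `p`; hence `V(p)` equals the HP-value and offering the
high-privacy coupon is optimal at belief `p`. -/
theorem hp_optimal_below_kappa (M : CouponModel) (hC : M.CHN < M.CHA)
    (V : ℝ → ℝ) (hV : M.IsValue V)
    (p : ℝ) (hp : p ∈ Set.Icc (0:ℝ) 1)
    (hpκ : p ≤ (M.CL - M.CHN) / (M.CHA - M.CHN)) :
    M.HPval V p ≤ M.LPval V p ∧ V p = M.HPval V p := by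
  have hcost : (1 - p) * M.CHN + p * M.CHA ≤ M.CL := by
    have := (le_div_iff₀ (sub_pos.mpr hC)).mp hpκ
    linarith
  have hle := hV.HPval_le_LPval hp hcost
  exact ⟨hle, (hV.eq_min hp).trans (min_eq_right hle)⟩
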